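/- arXiv:1809.03448 — 4 statements merged into one kernel-verified Lean document; each statement's English description precedes it below -/
import Mathlib

section
/- Let g be a C¹ function on ℝ supported in (-ℓ, ℓ). Then for any x with |x| ≤ 2ℓ, the Cauchy principal value satisfies |PV ∫ g(t)/(t-x) dt| ≤ C · ℓ^{1/2} · ‖g'‖_{L²}, with a universal constant C. -/
/-!
By the fundamental theorem of calculus and Cauchy–Schwarz, `|g (x + u) - g (x - u)| ≤ √(2u) ‖g'‖₂`,
so the principal-value integrand is at most `√2 ‖g'‖₂ / √u`. As `|x| ≤ 2ℓ` and `g` lives in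
`(-ℓ, ℓ)`, the integrand vanishes for `u ≥ 3ℓ`, and `∫₀^{3ℓ} u^{-1/2} du = 2√(3ℓ)` gives `C = 2√6`.
-/

open MeasureTheory Set

theorem abs_setIntegral_le_sqrt_measureReal_mul {α : Type*} [MeasurableSpace α] {μ : Measure α}
    {f : α → ℝ} (hf : MemLp f 2 μ) {s : Set α} (hs : μ s ≠ ⊤) :
    |∫ x in s, f x ∂μ| ≤ √(μ.real s) * (∫ x, f x ^ 2 ∂μ) ^ (1 / 2 : ℝ) := by
  have : IsFiniteMeasure (μ.restrict s) := ⟨by simpa [lt_top_iff_ne_top] using hs⟩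
  have hHolder := integral_mul_le_Lp_mul_Lq_of_nonneg (μ := μ.restrict s)
    Real.HolderConjugate.two_two (ae_of_all _ fun x => abs_nonneg (f x))
    (ae_of_all _ fun _ => zero_le_one) (by rw [ENNReal.ofReal_ofNat]; exact (hf.restrict s).abs)
    (by simpa using memLp_const (1 : ℝ))
  simp only [mul_one, Real.rpow_two, sq_abs, one_pow, setIntegral_const, smul_eq_mul] at hHolder
  have hsq_nonneg : 0 ≤ᵐ[μ] fun x => f x ^ 2 := ae_of_all _ fun x => sq_nonneg (f x)
  calc |∫ x in s, f x ∂μ| ≤ ∫ x in s, |f x| ∂μ := abs_integral_le_integral_abs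
    _ ≤ (∫ x in s, f x ^ 2 ∂μ) ^ (1 / 2 : ℝ) * (μ.real s) ^ (1 / 2 : ℝ) := hHolder
    _ ≤ (∫ x, f x ^ 2 ∂μ) ^ (1 / 2 : ℝ) * (μ.real s) ^ (1 / 2 : ℝ) := by
      gcongr ?_ ^ _ * _
      exact setIntegral_le_integral hf.integrable_sq hsq_nonneg
    _ = √(μ.real s) * (∫ x, f x ^ 2 ∂μ) ^ (1 / 2 : ℝ) := by rw [Real.sqrt_eq_rpow, mul_comm]

theorem abs_sub_le_sqrt_mul_integral_deriv_sq {g : ℝ → ℝ} (hg : ContDiff ℝ 1 g)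
    (hg' : MemLp (deriv g) 2) {a b : ℝ} (hab : a ≤ b) :
    |g b - g a| ≤ √(b - a) * (∫ t, deriv g t ^ 2) ^ (1 / 2 : ℝ) := by
  rw [← intervalIntegral.integral_deriv_eq_sub (fun t _ => hg.differentiable one_ne_zero t)
    ((hg.continuous_deriv le_rfl).intervalIntegrable a b), intervalIntegral.integral_of_le hab,
    ← Real.volume_real_Ioc_of_le hab]
  exact abs_setIntegral_le_sqrt_measureReal_mul hg' measure_Ioc_lt_top.ne

theorem div_sqrt_eqOn_mul_rpow (c : ℝ) :
    EqOn (fun u => c / √u) (fun u => c * u ^ (-1 / 2 : ℝ)) (Ici 0) := fun u hu => by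
  dsimp only
  rw [Real.sqrt_eq_rpow, div_eq_mul_inv, ← Real.rpow_neg hu]
  norm_num

theorem intervalIntegrable_div_sqrt {b : ℝ} (hb : 0 ≤ b) (c : ℝ) :
    IntervalIntegrable (fun u => c / √u) volume 0 b :=
  ((intervalIntegral.intervalIntegrable_rpow' (r := -1 / 2) (by norm_num)).const_mul c).congr_uIoo
    ((div_sqrt_eqOn_mul_rpow c).symm.mono fun _ hu => by
      rw [uIoo_of_le hb] at hu; exact hu.1.le)

theorem integral_div_sqrt {b : ℝ} (hb : 0 ≤ b) (c : ℝ) :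
    ∫ u in (0 : ℝ)..b, c / √u = 2 * c * √b := by
  rw [intervalIntegral.integral_congr ((div_sqrt_eqOn_mul_rpow c).mono fun _ hu => by
      rw [uIcc_of_le hb] at hu; exact hu.1),
    intervalIntegral.integral_const_mul, integral_rpow (Or.inl (by norm_num)), Real.sqrt_eq_rpow]
  norm_num
  ring

theorem abs_setIntegral_Ioc_le_of_abs_le_div_sqrt {F : ℝ → ℝ} {b c : ℝ} (hb : 0 ≤ b)
    (hF : ∀ u ∈ Ioc 0 b, |F u| ≤ c / √u) : |∫ u in Ioc 0 b, F u| ≤ 2 * c * √b := by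
  rw [← intervalIntegral.integral_of_le hb, ← integral_div_sqrt hb]
  exact intervalIntegral.norm_integral_le_of_norm_le hb
    (ae_of_all _ fun u hu => (Real.norm_eq_abs _).trans_le (hF u hu))
    (intervalIntegrable_div_sqrt hb c)

theorem abs_sub_div_le_sqrt_two_mul_div_sqrt {g : ℝ → ℝ} (hg : ContDiff ℝ 1 g)
    (hg' : MemLp (deriv g) 2) (x : ℝ) {u : ℝ} (hu : 0 < u) :
    |(g (x + u) - g (x - u)) / u| ≤ √2 * (∫ t, deriv g t ^ 2) ^ (1 / 2 : ℝ) / √u := by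
  have hFTC := abs_sub_le_sqrt_mul_integral_deriv_sq hg hg' (a := x - u) (b := x + u) (by linarith)
  rw [show x + u - (x - u) = 2 * u by ring, Real.sqrt_mul zero_le_two] at hFTC
  have hsqrt : √u * √u = u := Real.mul_self_sqrt hu.le
  have hsqrt_pos : 0 < √u := Real.sqrt_pos.mpr hu
  rw [abs_div, abs_of_pos hu, div_le_div_iff₀ hu hsqrt_pos]
  calc |g (x + u) - g (x - u)| * √u
      ≤ √2 * √u * (∫ t, deriv g t ^ 2) ^ (1 / 2 : ℝ) * √u := by gcongr
    _ = √2 * (∫ t, deriv g t ^ 2) ^ (1 / 2 : ℝ) * u := by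
        linear_combination √2 * (∫ t, deriv g t ^ 2) ^ (1 / 2 : ℝ) * hsqrt

/-- Bound on the Cauchy principal value `PV ∫ g(t)/(t-x) dt` for a `C¹`
function `g` supported in `(-ℓ, ℓ)` and `|x| ≤ 2ℓ`. -/
theorem pv_bound_sqrt_ell_L2 :
    ∃ C > 0, ∀ (ℓ : ℝ), 0 < ℓ → ∀ g : ℝ → ℝ, ContDiff ℝ 1 g →
      (∀ t, t ∉ Set.Ioo (-ℓ) ℓ → g t = 0) →
      ∀ x : ℝ, |x| ≤ 2 * ℓ →
        |∫ u in Set.Ioi (0 : ℝ), (g (x + u) - g (x - u)) / u| ≤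
          C * Real.sqrt ℓ * (∫ t : ℝ, (deriv g t) ^ 2) ^ ((1 : ℝ) / 2) := by
  refine ⟨2 * √6, by positivity, fun ℓ hℓ g hg hsupp x hx => ?_⟩
  have hg_cs : HasCompactSupport g := HasCompactSupport.intro (isCompact_Icc (a := -ℓ) (b := ℓ))
    fun t ht => hsupp t fun h => ht (Ioo_subset_Icc_self h)
  have hg' : MemLp (deriv g) 2 :=
    (hg.continuous_deriv le_rfl).memLp_of_hasCompactSupport hg_cs.deriv
  have hvanish : ∀ u ∈ Ioi 0 \ Ioc 0 (3 * ℓ), (g (x + u) - g (x - u)) / u = 0 := by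
    rintro u ⟨hu₀, hu⟩
    have hu : 3 * ℓ < u := by simpa [mem_Ioi.mp hu₀] using hu
    have hx' := abs_le.mp hx
    rw [hsupp (x + u) fun h => by linarith [h.2], hsupp (x - u) fun h => by linarith [h.1],
      sub_self, zero_div]
  rw [setIntegral_eq_of_subset_of_forall_sdiff_eq_zero measurableSet_Ioi Ioc_subset_Ioi_self
    hvanish]
  calc _ ≤ 2 * (√2 * (∫ t, deriv g t ^ 2) ^ (1 / 2 : ℝ)) * √(3 * ℓ) :=
        abs_setIntegral_Ioc_le_of_abs_le_div_sqrt (by positivity)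
          fun u hu => abs_sub_div_le_sqrt_two_mul_div_sqrt hg hg' x hu.1
    _ = 2 * √6 * √ℓ * (∫ t, deriv g t ^ 2) ^ (1 / 2 : ℝ) := by
        rw [show (6 : ℝ) = 2 * 3 by norm_num, Real.sqrt_mul zero_le_two,
          Real.sqrt_mul zero_le_three]
        ring
end

section
/- Let g be a C¹ compactly supported function on ℝ and C a locally finite point configuration on ℝ. Then |∫ g(x)(dC(x) - dx)| ≤ K · Σ_{i ∈ ℤ} |g|_{1,V_i} · D̃_i, where K is a universal constant, |g|_{1,V_i} := sup_{y ∈ [i-3,i+3]} |g'(y)|, and D̃_i := |Discr_{[0,i]}| + |Discr_{[i,i+1]}| + 1. -/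
/-!
Cut ℝ into the cells `(i, i + 1]`. On a cell, replacing `g` by `g i` costs at most
`|g|_{1,V_i}` times the total mass `C (i, i + 1] + 1 = Discr_{[i,i+1]} + 2`. The remaining sum
`∑ g i · Discr_{[i,i+1]}` is summed by parts against the cumulative discrepancies
`S i = Discr_{[0,i]}`: it equals `∑ (g (i - 1) - g i) · S i`, and `|g (i - 1) - g i| ≤ |g|_{1,V_i}`.
Together this gives the bound with `K = 2`.
-/

open MeasureTheory Set Function

theorem finite_setOf_intCast_mem {K : Set ℝ} (hK : IsCompact K) : {i : ℤ | (i : ℝ) ∈ K}.Finite := by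
  simpa using Filter.eventually_cofinite.mp (Int.tendsto_coe_cofinite hK.compl_mem_cocompact)

theorem HasCompactSupport.hasFiniteSupport_intCast {M : Type*} [Zero M] {f : ℝ → M}
    (hf : HasCompactSupport f) : HasFiniteSupport fun i : ℤ => f i :=
  (finite_setOf_intCast_mem hf.isCompact).subset fun _ hi => subset_tsupport f hi

theorem hasSum_int_add_one_sub_self {α : Type*} [AddCommGroup α] [TopologicalSpace α]
    [IsTopologicalAddGroup α] {f : ℤ → α} (hf : HasFiniteSupport f) :
    HasSum (fun i => f (i + 1) - f i) 0 := by
  have hs : Summable f := summable_of_hasFiniteSupport hf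
  have hs' : Summable fun i => f (i + 1) := (Equiv.addRight 1).summable_iff.mpr hs
  have hshift : ∑' i, f (i + 1) = ∑' i, f i := (Equiv.addRight 1).tsum_eq f
  simpa [hshift] using hs'.hasSum.sub hs.hasSum

theorem le_biSup_of_continuousOn {X α : Type*} [TopologicalSpace X]
    [ConditionallyCompleteLinearOrder α] [TopologicalSpace α] [OrderTopology α] {f : X → α}
    {s : Set X} (hs : IsCompact s)
    (hf : ContinuousOn f s) {x : X} (hx : x ∈ s) : f x ≤ ⨆ y ∈ s, f y :=
  le_ciSup₂ (f := fun y (_ : y ∈ s) => f y) ((hs.bddAbove_image hf).mono <|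
    iUnion_subset fun _ => range_subset_iff.mpr fun hy => mem_image_of_mem f hy) x hx

theorem abs_sub_le_biSup_abs_deriv_mul {g : ℝ → ℝ} (hg : ContDiff ℝ 1 g) {a b x y : ℝ}
    (hx : x ∈ Icc a b) (hy : y ∈ Icc a b) :
    |g y - g x| ≤ (⨆ z ∈ Icc a b, |deriv g z|) * |y - x| :=
  Convex.norm_image_sub_le_of_norm_deriv_le (fun z _ => hg.differentiable one_ne_zero z)
    (fun _ hz => le_biSup_of_continuousOn isCompact_Icc
      (hg.continuous_deriv le_rfl).abs.continuousOn hz) (convex_Icc a b) hx hy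

theorem isFiniteMeasureOnCompacts_of_Icc {μ : Measure ℝ}
    (h : ∀ a b : ℝ, a ≤ b → μ (Icc a b) ≠ ⊤) : IsFiniteMeasureOnCompacts μ := by
  refine ⟨fun K hK => ?_⟩
  obtain ⟨r, hr, hKr⟩ := hK.isBounded.subset_closedBall_lt 0 0
  rw [Real.closedBall_eq_Icc] at hKr
  exact (measure_mono hKr).trans_lt (h _ _ (by linarith)).lt_top

noncomputable def intervalFluct (C : Measure ℝ) (g : ℝ → ℝ) (a b : ℝ) : ℝ :=
  (∫ x in a..b, g x ∂C) - ∫ x in a..b, g x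

noncomputable def discr (C : Measure ℝ) (a b : ℝ) : ℝ :=
  intervalFluct C (fun _ => 1) a b

theorem discr_of_le (C : Measure ℝ) {a b : ℝ} (hab : a ≤ b) :
    discr C a b = (C (Ioc a b)).toReal - (b - a) := by
  simp [discr, intervalFluct, intervalIntegral.integral_of_le hab, measureReal_def, hab]

theorem discr_symm (C : Measure ℝ) (a b : ℝ) : discr C b a = -discr C a b := by
  simp only [discr, intervalFluct, intervalIntegral.integral_symm a b]
  ring

theorem discr_add_discr (C : Measure ℝ) [IsLocallyFiniteMeasure C] (a b c : ℝ) :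
    discr C a b + discr C b c = discr C a c := by
  have hC := intervalIntegral.integral_add_adjacent_intervals (μ := C) (a := a) (b := b) (c := c)
    (f := fun _ => (1 : ℝ)) intervalIntegrable_const intervalIntegrable_const
  have hL := intervalIntegral.integral_add_adjacent_intervals (μ := volume) (a := a) (b := b)
    (c := c) (f := fun _ => (1 : ℝ)) intervalIntegrable_const intervalIntegrable_const
  simp only [discr, intervalFluct]
  linarith

theorem abs_discr_zero_left (C : Measure ℝ) (b : ℝ) :
    |discr C 0 b| = abs ((C (uIoc 0 b)).toReal - |b|) := by
  rcases le_total 0 b with hb | hb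
  · rw [discr_of_le C hb, uIoc_of_le hb, abs_of_nonneg hb, sub_zero]
  · rw [discr_symm, discr_of_le C hb, uIoc_of_ge hb, abs_of_nonpos hb, abs_neg, zero_sub]

theorem abs_intervalIntegral_le_mul_measureReal {μ : Measure ℝ} [IsLocallyFiniteMeasure μ]
    {f : ℝ → ℝ} {a b L : ℝ} (hab : a ≤ b) (hL : ∀ x ∈ Ioc a b, |f x| ≤ L) :
    |∫ x in a..b, f x ∂μ| ≤ L * μ.real (Ioc a b) := by
  rw [intervalIntegral.integral_of_le hab]
  exact norm_setIntegral_le_of_norm_le_const (f := f) measure_Ioc_lt_top hL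

theorem abs_intervalFluct_sub_mul_discr_le (C : Measure ℝ) [IsLocallyFiniteMeasure C]
    {g : ℝ → ℝ} (hg : Continuous g) {a b c L : ℝ} (hab : a ≤ b)
    (hL : ∀ x ∈ Ioc a b, |g x - c| ≤ L) :
    |intervalFluct C g a b - c * discr C a b| ≤ L * (discr C a b + 2 * (b - a)) := by
  have hfluct : intervalFluct C g a b - c * discr C a b =
      (∫ x in a..b, (g x - c) ∂C) - ∫ x in a..b, (g x - c) := by
    simp only [discr, intervalFluct]
    rw [intervalIntegral.integral_sub (hg.intervalIntegrable _ _) intervalIntegrable_const,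
      intervalIntegral.integral_sub (hg.intervalIntegrable _ _) intervalIntegrable_const]
    simp only [intervalIntegral.integral_const', smul_eq_mul]
    ring
  have hC := abs_intervalIntegral_le_mul_measureReal (μ := C) hab hL
  have hvol := abs_intervalIntegral_le_mul_measureReal (μ := volume) hab hL
  rw [Real.volume_real_Ioc_of_le hab] at hvol
  have hCmass : C.real (Ioc a b) = discr C a b + (b - a) := by
    rw [discr_of_le C hab, measureReal_def]
    ring
  rw [hCmass] at hC
  rw [hfluct]
  calc _ ≤ _ := abs_sub _ _
    _ ≤ _ := add_le_add hC hvol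
    _ = _ := by ring

noncomputable def localDerivSup (g : ℝ → ℝ) (i : ℤ) : ℝ :=
  ⨆ y ∈ Icc ((i : ℝ) - 3) ((i : ℝ) + 3), |deriv g y|

noncomputable def discrWeight (C : Measure ℝ) (i : ℤ) : ℝ :=
  |discr C 0 i| + |discr C i (i + 1)| + 1

theorem localDerivSup_nonneg (g : ℝ → ℝ) (i : ℤ) : 0 ≤ localDerivSup g i :=
  Real.iSup_nonneg fun _ => Real.iSup_nonneg fun _ => abs_nonneg _

theorem hasFiniteSupport_localDerivSup {g : ℝ → ℝ} (hg : HasCompactSupport g) :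
    HasFiniteSupport (localDerivSup g) := by
  refine (finite_setOf_intCast_mem (hg.deriv.isCompact.cthickening (r := 3))).subset
    fun i hi => ?_
  obtain ⟨y, hy, hy0⟩ : ∃ y ∈ Icc ((i : ℝ) - 3) ((i : ℝ) + 3), deriv g y ≠ 0 := by
    by_contra! h
    refine hi (le_antisymm (Real.iSup_le (fun y => Real.iSup_le (fun hy => ?_) le_rfl) le_rfl)
      (localDerivSup_nonneg g i))
    rw [h y hy, abs_zero]
  refine Metric.mem_cthickening_of_dist_le _ y _ _ (subset_tsupport _ hy0) ?_
  rw [Real.dist_eq, abs_le]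
  constructor <;> linarith [hy.1, hy.2]

theorem abs_sub_le_localDerivSup {g : ℝ → ℝ} (hg : ContDiff ℝ 1 g) {i : ℤ} {x y : ℝ}
    (hx : x ∈ Icc ((i : ℝ) - 3) ((i : ℝ) + 3)) (hy : y ∈ Icc ((i : ℝ) - 3) ((i : ℝ) + 3))
    (hxy : |y - x| ≤ 1) : |g y - g x| ≤ localDerivSup g i :=
  (abs_sub_le_biSup_abs_deriv_mul hg hx hy).trans <|
    mul_le_of_le_one_right (localDerivSup_nonneg g i) hxy

/-- Summation by parts, one cell at a time: `g i * Discr_{[i,i+1]}` is the increment of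
`j ↦ g (j - 1) * S j` plus `(g (i - 1) - g i) * S i`. -/
theorem abs_intervalFluct_sub_telescope_le (C : Measure ℝ) [IsLocallyFiniteMeasure C]
    {g : ℝ → ℝ} (hg : ContDiff ℝ 1 g) (i : ℤ) :
    |intervalFluct C g i (i + 1) - (g i * discr C 0 (i + 1) - g (i - 1) * discr C 0 i)| ≤
      2 * (localDerivSup g i * discrWeight C i) := by
  have hi : (i : ℝ) ∈ Icc ((i : ℝ) - 3) ((i : ℝ) + 3) := ⟨by linarith, by linarith⟩
  have hcell : |intervalFluct C g i (i + 1) - g i * discr C i (i + 1)| ≤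
      localDerivSup g i * (discr C i (i + 1) + 2) := by
    have h := abs_intervalFluct_sub_mul_discr_le C hg.continuous (a := i) (b := i + 1) (c := g i)
      (L := localDerivSup g i) (by linarith) fun x hx =>
        abs_sub_le_localDerivSup hg hi ⟨by linarith [hx.1], by linarith [hx.2]⟩
          (by rw [abs_le]; constructor <;> linarith [hx.1, hx.2])
    rwa [add_sub_cancel_left, mul_one] at h
  have hstep : |g (i - 1) - g i| ≤ localDerivSup g i :=
    abs_sub_le_localDerivSup hg hi ⟨by linarith, by linarith⟩ (by norm_num)
  have hsplit : discr C 0 (i + 1) = discr C 0 i + discr C i (i + 1) :=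
    (discr_add_discr C 0 i (i + 1)).symm
  set M := localDerivSup g i
  set S := discr C 0 i
  set Δ := discr C i (i + 1)
  have hM : 0 ≤ M := localDerivSup_nonneg g i
  rw [hsplit]
  calc _ = |(intervalFluct C g i (i + 1) - g i * Δ) + (g (i - 1) - g i) * S| := by ring_nf
    _ ≤ M * (Δ + 2) + M * |S| := by
      refine (abs_add_le _ _).trans (add_le_add hcell ?_)
      rw [abs_mul]
      exact mul_le_mul_of_nonneg_right hstep (abs_nonneg S)
    _ ≤ 2 * (M * discrWeight C i) := by
      have : 0 ≤ M * (|S| + (|Δ| - Δ) + |Δ|) := by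
        have := le_abs_self Δ
        positivity
      rw [discrWeight]
      linarith

theorem hasSum_intervalFluct {C : Measure ℝ} {g : ℝ → ℝ} (hgC : Integrable g C)
    (hg : Integrable g) :
    HasSum (fun i : ℤ => intervalFluct C g i (i + 1)) ((∫ x, g x ∂C) - ∫ x, g x) := by
  simpa [intervalFluct] using (hgC.hasSum_intervalIntegral 0).sub (hg.hasSum_intervalIntegral 0)

theorem localDerivSup_mul_discrWeight (C : Measure ℝ) (g : ℝ → ℝ) (i : ℤ) :
    localDerivSup g i * discrWeight C i =
      (⨆ y ∈ Set.Icc ((i : ℝ) - 3) ((i : ℝ) + 3), |deriv g y|) *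
        (abs ((C (Set.uIoc (0 : ℝ) (i : ℝ))).toReal - |(i : ℝ)|) +
          |(C (Set.Ioc (i : ℝ) ((i : ℝ) + 1))).toReal - 1| + 1) := by
  rw [localDerivSup, discrWeight, abs_discr_zero_left, discr_of_le C (by linarith),
    add_sub_cancel_left]

/-- A priori bound on fluctuations of linear statistics, in terms of discrepancies.
A point configuration on `ℝ` is encoded as a measure `C` which is integer-valued
and finite on compact intervals (a locally finite point configuration, with
multiplicities).  `Discr_{[a,b]}` is `C([a,b]) - |b-a|`. -/
theorem apriori_bound_fluctuations :
    ∃ K > 0, ∀ C : Measure ℝ,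
      (∀ a b : ℝ, a ≤ b → ∃ n : ℕ, C (Set.Icc a b) = (n : ENNReal)) →
      ∀ g : ℝ → ℝ, ContDiff ℝ 1 g → HasCompactSupport g →
        |(∫ x, g x ∂C) - ∫ x, g x| ≤
          K * ∑' i : ℤ,
            (⨆ y ∈ Set.Icc ((i : ℝ) - 3) ((i : ℝ) + 3), |deriv g y|) *
            (abs ((C (Set.uIoc (0 : ℝ) (i : ℝ))).toReal - |(i : ℝ)|) +
              |(C (Set.Ioc (i : ℝ) ((i : ℝ) + 1))).toReal - 1| + 1) := by
  refine ⟨2, two_pos, fun C hC g hg hsupp => ?_⟩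
  have : IsFiniteMeasureOnCompacts C := isFiniteMeasureOnCompacts_of_Icc fun a b hab => by
    obtain ⟨n, hn⟩ := hC a b hab
    simp [hn]
  have hfluct := hasSum_intervalFluct
    (hg.continuous.integrable_of_hasCompactSupport (μ := C) hsupp)
    (hg.continuous.integrable_of_hasCompactSupport (μ := volume) hsupp)
  set h : ℤ → ℝ := fun j => g ((j : ℝ) - 1) * discr C 0 j
  have hh : HasFiniteSupport h :=
    (hsupp.comp_homeomorph (Homeomorph.subRight 1)).hasFiniteSupport_intCast.fun_mul_left _
  have hw : Summable fun i => localDerivSup g i * discrWeight C i :=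
    summable_of_hasFiniteSupport ((hasFiniteSupport_localDerivSup hsupp).fun_mul_left _)
  have hbound : ∀ i : ℤ, ‖intervalFluct C g i (i + 1) - (h (i + 1) - h i)‖ ≤
      2 * (localDerivSup g i * discrWeight C i) := fun i => by
    simpa [h] using abs_intervalFluct_sub_telescope_le C hg i
  have hsum := (hfluct.sub (hasSum_int_add_one_sub_self hh)).tsum_eq
  calc |(∫ x, g x ∂C) - ∫ x, g x|
      = ‖∑' i : ℤ, (intervalFluct C g i (i + 1) - (h (i + 1) - h i))‖ := by
        rw [hsum, sub_zero, Real.norm_eq_abs]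
    _ ≤ 2 * ∑' i, localDerivSup g i * discrWeight C i :=
        tsum_of_norm_bounded (hw.hasSum.mul_left 2) hbound
    _ = _ := by simp only [localDerivSup_mul_discrWeight]
end

section
/- For every t ∈ (-λ, λ), the principal value integral PV ∫_{-λ}^{λ} 1/(√(λ²-x²)·(t-x)) dx equals 0. -/
/-!
With `s = √(λ² - t²)`, the function
`P(y) = (log (s √(λ² - y²) + λ² - t y) - log |t - y|) / s`
is an antiderivative of the kernel on each side of `t`. The kernel has constant sign on each
side, hence is integrable there, and `P(-λ) = P(λ) = log λ / s`. So the truncated integral is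
`P(t - ε) - P(t + ε)`, in which the two `log ε` singularities cancel, leaving a continuous
function of `ε` that vanishes at `0`.
-/

open MeasureTheory Filter
open Set Real Topology

theorem Set.Ioo_sdiff_Ioo_eq_Ioc_union_Ico {α : Type*} [LinearOrder α] {a b c d : α}
    (hcb : c < b) (had : a < d) : Ioo a b \ Ioo c d = Ioc a c ∪ Ico d b := by
  ext x
  simp only [mem_sdiff, mem_Ioo, mem_union, mem_Ioc, mem_Ico, not_and, not_lt]
  grind

theorem intervalIntegral.integrableOn_deriv_of_nonpos {g g' : ℝ → ℝ} {a b : ℝ}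
    (hcont : ContinuousOn g (Icc a b)) (hderiv : ∀ x ∈ Ioo a b, HasDerivAt g (g' x) x)
    (hneg : ∀ x ∈ Ioo a b, g' x ≤ 0) : IntegrableOn g' (Ioc a b) := by
  simpa using (integrableOn_deriv_of_nonneg hcont.neg (fun x hx => (hderiv x hx).neg)
    fun x hx => neg_nonneg.2 (hneg x hx)).neg

noncomputable def arcsineKernel (lam t x : ℝ) : ℝ := 1 / (√(lam ^ 2 - x ^ 2) * (t - x))

/-- `Real.log (t - y)` is `log |t - y|`, so one formula serves on both sides of `t`. -/
noncomputable def arcsineKernelPrimitive (lam t y : ℝ) : ℝ :=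
  (log (√(lam ^ 2 - t ^ 2) * √(lam ^ 2 - y ^ 2) + lam ^ 2 - t * y) - log (t - y)) /
    √(lam ^ 2 - t ^ 2)

section

variable {lam t x : ℝ}

theorem arcsineKernel_nonneg (hx : x < t) : 0 ≤ arcsineKernel lam t x :=
  one_div_nonneg.2 (mul_nonneg (sqrt_nonneg _) (sub_nonneg.2 hx.le))

theorem arcsineKernel_nonpos (hx : t < x) : arcsineKernel lam t x ≤ 0 :=
  one_div_nonpos.2 (mul_nonpos_of_nonneg_of_nonpos (sqrt_nonneg _) (sub_nonpos.2 hx.le))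

theorem arcsineKernelPrimitive_log_arg_pos (ht : |t| < lam) (hx : |x| ≤ lam) :
    0 < √(lam ^ 2 - t ^ 2) * √(lam ^ 2 - x ^ 2) + lam ^ 2 - t * x := by
  have htx : t * x < lam ^ 2 := calc
    t * x ≤ |t| * |x| := (le_abs_self _).trans_eq (abs_mul t x)
    _ ≤ |t| * lam := mul_le_mul_of_nonneg_left hx (abs_nonneg t)
    _ < lam * lam := mul_lt_mul_of_pos_right ht ((abs_nonneg t).trans_lt ht)
    _ = lam ^ 2 := (sq lam).symm
  have := mul_nonneg (sqrt_nonneg (lam ^ 2 - t ^ 2)) (sqrt_nonneg (lam ^ 2 - x ^ 2))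
  linarith

theorem hasDerivAt_arcsineKernelPrimitive (ht : |t| < lam) (hx : |x| < lam) (hxt : x ≠ t) :
    HasDerivAt (arcsineKernelPrimitive lam t) (arcsineKernel lam t x) x := by
  have hs : 0 < lam ^ 2 - t ^ 2 := sub_pos.2 (sq_lt_sq' (abs_lt.1 ht).1 (abs_lt.1 ht).2)
  have hr : 0 < lam ^ 2 - x ^ 2 := sub_pos.2 (sq_lt_sq' (abs_lt.1 hx).1 (abs_lt.1 hx).2)
  have hN := arcsineKernelPrimitive_log_arg_pos ht hx.le
  have htx : t - x ≠ 0 := sub_ne_zero.2 hxt.symm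
  set s := √(lam ^ 2 - t ^ 2)
  set r := √(lam ^ 2 - x ^ 2) with r_def
  have hs2 : s ^ 2 = lam ^ 2 - t ^ 2 := sq_sqrt hs.le
  have hr2 : r ^ 2 = lam ^ 2 - x ^ 2 := sq_sqrt hr.le
  have hs0 : s ≠ 0 := (sqrt_pos.2 hs).ne'
  have hr0 : r ≠ 0 := (sqrt_pos.2 hr).ne'
  have hr_deriv : HasDerivAt (fun y => √(lam ^ 2 - y ^ 2)) (-x / r) x := by
    convert ((hasDerivAt_pow 2 x).const_sub (lam ^ 2)).sqrt hr.ne' using 1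
    rw [← r_def]
    field_simp
    ring
  have hN_deriv :=
    ((hr_deriv.const_mul s).add_const (lam ^ 2)).sub ((hasDerivAt_id x).const_mul t)
  refine (((hN_deriv.log hN.ne').sub (((hasDerivAt_id x).const_sub t).log htx)).div_const
    s).congr_deriv ?_
  simp only [arcsineKernel, Pi.sub_apply, id, ← r_def]
  have hN0 : s * r + lam ^ 2 - x * t ≠ 0 := by rw [mul_comm x t]; exact hN.ne'
  field_simp
  linear_combination s * hr2 - r * hs2

theorem continuousOn_arcsineKernelPrimitive {s : Set ℝ} (ht : |t| < lam)
    (hs : s ⊆ Icc (-lam) lam) (hts : t ∉ s) :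
    ContinuousOn (arcsineKernelPrimitive lam t) s := by
  refine ContinuousOn.div_const (ContinuousOn.sub ?_ ?_) _
  · refine ContinuousOn.log (by fun_prop) fun x hx => ?_
    exact (arcsineKernelPrimitive_log_arg_pos ht (abs_le.2 (hs hx))).ne'
  · exact ContinuousOn.log (by fun_prop) fun x hx => sub_ne_zero.2 fun h => hts (h ▸ hx)

variable {a b : ℝ}

theorem hasDerivAt_arcsineKernelPrimitive_of_mem_Ioo (ht : |t| < lam) (ha : -lam ≤ a)
    (hb : b ≤ lam) (htab : t ∉ Icc a b) (hx : x ∈ Ioo a b) :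
    HasDerivAt (arcsineKernelPrimitive lam t) (arcsineKernel lam t x) x :=
  hasDerivAt_arcsineKernelPrimitive ht (abs_lt.2 ⟨ha.trans_lt hx.1, hx.2.trans_le hb⟩)
    fun h => htab (h ▸ Ioo_subset_Icc_self hx)

theorem integrableOn_arcsineKernel (ht : |t| < lam) (ha : -lam ≤ a) (hb : b ≤ lam)
    (htab : t ∉ Icc a b) : IntegrableOn (arcsineKernel lam t) (Ioc a b) := by
  have hcont := continuousOn_arcsineKernelPrimitive ht (Icc_subset_Icc ha hb) htab
  have hderiv := fun x => hasDerivAt_arcsineKernelPrimitive_of_mem_Ioo (x := x) ht ha hb htab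
  rcases lt_or_ge t a with hta | hat
  · exact intervalIntegral.integrableOn_deriv_of_nonpos hcont hderiv
      fun x hx => arcsineKernel_nonpos (hta.trans hx.1)
  · have hbt : b < t := not_le.1 fun hbt => htab ⟨hat, hbt⟩
    exact intervalIntegral.integrableOn_deriv_of_nonneg hcont hderiv
      fun x hx => arcsineKernel_nonneg (hx.2.trans hbt)

theorem integral_arcsineKernel (ht : |t| < lam) (ha : -lam ≤ a) (hb : b ≤ lam) (hab : a ≤ b)
    (htab : t ∉ Icc a b) :
    ∫ x in Ioc a b, arcsineKernel lam t x =
      arcsineKernelPrimitive lam t b - arcsineKernelPrimitive lam t a := by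
  rw [← intervalIntegral.integral_of_le hab]
  exact intervalIntegral.integral_eq_sub_of_hasDerivAt_of_le hab
    (continuousOn_arcsineKernelPrimitive ht (Icc_subset_Icc ha hb) htab)
    (fun x => hasDerivAt_arcsineKernelPrimitive_of_mem_Ioo ht ha hb htab)
    ((intervalIntegrable_iff_integrableOn_Ioc_of_le hab).2
      (integrableOn_arcsineKernel ht ha hb htab))

theorem arcsineKernelPrimitive_of_sq_eq {y : ℝ} (hy : y ^ 2 = lam ^ 2) (hy0 : y ≠ 0)
    (hyt : y ≠ t) : arcsineKernelPrimitive lam t y = log y / √(lam ^ 2 - t ^ 2) := by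
  rw [arcsineKernelPrimitive, ← hy, sub_self, sqrt_zero, mul_zero, zero_add,
    show y ^ 2 - t * y = y * (y - t) by ring, log_mul hy0 (sub_ne_zero.2 hyt), ← neg_sub y t,
    log_neg_eq_log]
  ring

theorem arcsineKernelPrimitive_neg_self (ht : |t| < lam) :
    arcsineKernelPrimitive lam t (-lam) = arcsineKernelPrimitive lam t lam := by
  have hlam : 0 < lam := (abs_nonneg t).trans_lt ht
  rw [arcsineKernelPrimitive_of_sq_eq (neg_sq lam) (neg_ne_zero.2 hlam.ne')
      (abs_lt.1 ht).1.ne, arcsineKernelPrimitive_of_sq_eq rfl hlam.ne' (abs_lt.1 ht).2.ne',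
    log_neg_eq_log]

theorem tendsto_arcsineKernelPrimitive_sub (ht : |t| < lam) :
    Tendsto
      (fun ε => arcsineKernelPrimitive lam t (t - ε) - arcsineKernelPrimitive lam t (t + ε))
      (𝓝 0) (𝓝 0) := by
  set N := fun y => √(lam ^ 2 - t ^ 2) * √(lam ^ 2 - y ^ 2) + lam ^ 2 - t * y with N_def
  have hNt : N t ≠ 0 := (arcsineKernelPrimitive_log_arg_pos ht ht.le).ne'
  have key : ∀ ε, arcsineKernelPrimitive lam t (t - ε) - arcsineKernelPrimitive lam t (t + ε) =
      (log (N (t - ε)) - log (N (t + ε))) / √(lam ^ 2 - t ^ 2) := fun ε => by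
    simp only [arcsineKernelPrimitive, N_def, sub_sub_cancel, sub_add_cancel_left, log_neg_eq_log]
    ring
  simp only [key]
  have hcont :
      ContinuousAt (fun ε => (log (N (t - ε)) - log (N (t + ε))) / √(lam ^ 2 - t ^ 2)) 0 := by
    fun_prop (disch := simpa using hNt)
  simpa using hcont.tendsto

theorem setIntegral_arcsineKernel_Ioo_sdiff_Ioo {ε : ℝ} (ht : |t| < lam) (hε : 0 < ε)
    (hleft : -lam ≤ t - ε) (hright : t + ε ≤ lam) :
    ∫ x in Ioo (-lam) lam \ Ioo (t - ε) (t + ε), arcsineKernel lam t x =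
      arcsineKernelPrimitive lam t (t - ε) - arcsineKernelPrimitive lam t (t + ε) := by
  have hl : t ∉ Icc (-lam) (t - ε) := fun h => by linarith [h.2]
  have hr : t ∉ Icc (t + ε) lam := fun h => by linarith [h.1]
  have hdisj : Disjoint (Ioc (-lam) (t - ε)) (Ico (t + ε) lam) :=
    disjoint_left.2 fun x h₁ h₂ => by linarith [h₁.2, h₂.1]
  rw [Ioo_sdiff_Ioo_eq_Ioc_union_Ico (by linarith) (by linarith),
    setIntegral_union hdisj measurableSet_Ico
      (integrableOn_arcsineKernel ht le_rfl (by linarith) hl)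
      ((integrableOn_arcsineKernel ht (by linarith) le_rfl hr).congr_set_ae Ico_ae_eq_Ioc),
    integral_Ico_eq_integral_Ioc, integral_arcsineKernel ht le_rfl (by linarith) hleft hl,
    integral_arcsineKernel ht (by linarith) le_rfl hright hr, arcsineKernelPrimitive_neg_self ht]
  ring

end

theorem pv_arcsine_kernel_zero_general (lam t : ℝ)
    (ht : t ∈ Set.Ioo (-lam) lam) :
    Tendsto
      (fun ε : ℝ =>
        ∫ x in Set.Ioo (-lam) lam \ Set.Ioo (t - ε) (t + ε),
          1 / (Real.sqrt (lam ^ 2 - x ^ 2) * (t - x)))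
      (nhdsWithin 0 (Set.Ioi 0)) (nhds 0) := by
  have ht' : |t| < lam := abs_lt.2 ht
  have hδ : 0 < min (t + lam) (lam - t) := lt_min (by linarith [ht.1]) (by linarith [ht.2])
  refine ((tendsto_arcsineKernelPrimitive_sub ht').mono_left nhdsWithin_le_nhds).congr' ?_
  filter_upwards [Ioo_mem_nhdsGT hδ] with ε ⟨hε, hεδ⟩
  exact (setIntegral_arcsineKernel_Ioo_sdiff_Ioo ht' hε
    (by linarith [min_le_left (t + lam) (lam - t)])
    (by linarith [min_le_right (t + lam) (lam - t)])).symm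

/-- For `t ∈ (-λ, λ)`, the principal value of `∫_{-λ}^{λ} dx / (√(λ²-x²)(t-x))`
vanishes. -/
theorem pv_arcsine_kernel_zero (lam t : ℝ) (hlam : 0 < lam)
    (ht : t ∈ Set.Ioo (-lam) lam) :
    Tendsto
      (fun ε : ℝ =>
        ∫ x in Set.Ioo (-lam) lam \ Set.Ioo (t - ε) (t + ε),
          1 / (Real.sqrt (lam ^ 2 - x ^ 2) * (t - x)))
      (nhdsWithin 0 (Set.Ioi 0)) (nhds 0) :=
  pv_arcsine_kernel_zero_general lam t ht
end

section
/- Let Φ: [-λ,λ] → [-λ,λ] be an increasing C¹ bijection pushing Lebesgue measure forward to μ(x)dx, let η be a finite point configuration in Λ = (-λ,λ) and η_Φ its image under Φ. Then ∬_{(Λ×Λ)∖diag} -log|x-y| (dη_Φ(x)-μ(x)dx)(dη_Φ(y)-μ(y)dy) = ∬_{(Λ×Λ)∖diag} -log|x-y| (dη(x)-dx)(dη(y)-dy) + ∬_{Λ×Λ} -log|1+Δ(x,y)| (dη-dx)(dη-dy) + ∫ log Φ'(x) dη(x), where Δ(x,y) := (Φ(y)-y-Φ(x)+x)/(y-x)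 (extended by Φ'-1 on the diagonal), assuming all the integrals are finite. -/
/-! For `x ≠ y` one has `-log|Φ x - Φ y| = -log|x - y| + slopeLog Φ x y`, while on the diagonal
`slopeLog Φ x x = -log Φ'(x)`. Since `Φ` pushes `dx` forward to `μ dx` (the identity for continuous
test functions determines the pushforward), every `μ`-integral of the kernel `-log|Φ p - y|`
becomes a `dx`-integral of `-log|Φ p - Φ y|`, so the atom–atom, atom–background and
background–background parts of the energy of `η_Φ` against `μ` split into those of `η` against
`dx` plus those of `slopeLog`. The atom–atom part of `crossTerm` also contains the diagonal
`∑ -log Φ'(p)`, which the Jacobian term cancels. -/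
open MeasureTheory intervalIntegral

/-- The interaction energy of `(dη - ρ dx)` against itself on `(Λ×Λ) ∖ diag`,
for a finite point configuration `η` in `Λ = (-λ,λ)` and a density `ρ`,
written in expanded form (removing the diagonal only affects the atomic part). -/
noncomputable def pairEnergy (lam : ℝ) (η : Finset ℝ) (ρ : ℝ → ℝ) : ℝ :=
  (∑ p ∈ η, ∑ q ∈ η, if p = q then 0 else -Real.log |p - q|)
    - 2 * ∑ p ∈ η, ∫ y in (-lam)..lam, (-Real.log |p - y|) * ρ y
    + ∫ x in (-lam)..lam, ∫ y in (-lam)..lam, (-Real.log |x - y|) * (ρ x * ρ y)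

/-- `-log|1 + Δ(x,y)|` where `Δ(x,y) = (ψ(y)-ψ(x))/(y-x)`, `ψ = Φ - id`,
extended by `Φ' - 1` on the diagonal. -/
noncomputable def slopeLog (Φ : ℝ → ℝ) (x y : ℝ) : ℝ :=
  -Real.log |1 + (if x = y then deriv Φ x - 1
      else ((Φ y - y) - (Φ x - x)) / (y - x))|

/-- `∬_{Λ×Λ} -log|1+Δ(x,y)| (dη-dx)(dη-dy)` in expanded form. -/
noncomputable def crossTerm (lam : ℝ) (Φ : ℝ → ℝ) (η : Finset ℝ) : ℝ :=
  (∑ p ∈ η, ∑ q ∈ η, slopeLog Φ p q)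
    - 2 * ∑ p ∈ η, ∫ y in (-lam)..lam, slopeLog Φ p y
    + ∫ x in (-lam)..lam, ∫ y in (-lam)..lam, slopeLog Φ x y


open Set Filter
open scoped BoundedContinuousFunction

section Pushforward

variable {α : Type*} [MeasurableSpace α] {ν : Measure α} {Φ : α → α} {ρ : α → ℝ}

theorem integral_withDensity_ofReal_eq_integral_mul (hρ : AEMeasurable ρ ν) (hρ0 : 0 ≤ᵐ[ν] ρ)
    (g : α → ℝ) :
    ∫ x, g x ∂ν.withDensity (fun x => ENNReal.ofReal (ρ x)) = ∫ x, g x * ρ x ∂ν := by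
  rw [integral_withDensity_eq_integral_toReal_smul₀ hρ.ennreal_ofReal
    (ae_of_all _ fun _ => ENNReal.ofReal_lt_top)]
  refine integral_congr_ae ?_
  filter_upwards [hρ0] with x hx
  rw [ENNReal.toReal_ofReal hx, smul_eq_mul, mul_comm]

theorem integrable_withDensity_ofReal_iff (hρ : AEMeasurable ρ ν) (hρ0 : 0 ≤ᵐ[ν] ρ)
    {g : α → ℝ} :
    Integrable g (ν.withDensity fun x => ENNReal.ofReal (ρ x)) ↔
      Integrable (fun x => g x * ρ x) ν := by
  rw [integrable_withDensity_iff_integrable_smul₀' hρ.ennreal_ofReal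
    (ae_of_all _ fun _ => ENNReal.ofReal_lt_top)]
  refine integrable_congr ?_
  filter_upwards [hρ0] with x hx
  rw [ENNReal.toReal_ofReal hx, smul_eq_mul, mul_comm]

variable (ν Φ ρ) in
structure PushesToDensity : Prop where
  aemeasurable : AEMeasurable Φ ν
  aestronglyMeasurable_density : AEStronglyMeasurable ρ ν
  density_nonneg : 0 ≤ᵐ[ν] ρ
  map_eq : ν.map Φ = ν.withDensity fun x => ENNReal.ofReal (ρ x)

namespace PushesToDensity

theorem of_forall_integral_comp [TopologicalSpace α] [HasOuterApproxClosed α] [BorelSpace α]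
    [IsFiniteMeasure ν] (hΦ : AEMeasurable Φ ν) (hρ : Integrable ρ ν) (hρ0 : 0 ≤ᵐ[ν] ρ)
    (h : ∀ f : α →ᵇ ℝ, ∫ x, f (Φ x) ∂ν = ∫ x, f x * ρ x ∂ν) :
    PushesToDensity ν Φ ρ := by
  refine ⟨hΦ, hρ.aestronglyMeasurable, hρ0, ?_⟩
  have := isFiniteMeasure_withDensity_ofReal hρ.hasFiniteIntegral
  refine ext_of_forall_integral_eq_of_IsFiniteMeasure fun f => ?_
  rw [integral_map hΦ f.continuous.aestronglyMeasurable,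
    integral_withDensity_ofReal_eq_integral_mul hρ.aemeasurable hρ0, h]

theorem aestronglyMeasurable_map (h : PushesToDensity ν Φ ρ) {g : α → ℝ}
    (hg : AEStronglyMeasurable g ν) : AEStronglyMeasurable g (ν.map Φ) :=
  h.map_eq ▸ hg.mono_ac (withDensity_absolutelyContinuous _ _)

theorem integral_comp (h : PushesToDensity ν Φ ρ) {g : α → ℝ}
    (hg : AEStronglyMeasurable g ν) : ∫ x, g (Φ x) ∂ν = ∫ x, g x * ρ x ∂ν := by
  rw [← integral_map h.aemeasurable (h.aestronglyMeasurable_map hg), h.map_eq,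
    integral_withDensity_ofReal_eq_integral_mul h.aestronglyMeasurable_density.aemeasurable
      h.density_nonneg]

theorem integrable_comp (h : PushesToDensity ν Φ ρ) {g : α → ℝ}
    (hg : AEStronglyMeasurable g ν) (hgρ : Integrable (fun x => g x * ρ x) ν) :
    Integrable (fun x => g (Φ x)) ν := by
  refine (integrable_map_measure (h.aestronglyMeasurable_map hg) h.aemeasurable).mp ?_
  rwa [h.map_eq, integrable_withDensity_ofReal_iff
    h.aestronglyMeasurable_density.aemeasurable h.density_nonneg]

end PushesToDensity

end Pushforward

theorem PushesToDensity.of_intervalIntegral_comp {a b : ℝ} (hab : a ≤ b) {Φ ρ : ℝ → ℝ}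
    (hΦ : ContinuousOn Φ (Icc a b)) (hρ : ContinuousOn ρ (Icc a b))
    (hρ0 : ∀ x ∈ Icc a b, 0 ≤ ρ x)
    (hpush : ∀ f : ℝ → ℝ, Continuous f → ∫ x in a..b, f (Φ x) = ∫ x in a..b, f x * ρ x) :
    PushesToDensity (volume.restrict (Ioc a b)) Φ ρ := by
  refine .of_forall_integral_comp ((hΦ.mono Ioc_subset_Icc_self).aemeasurable measurableSet_Ioc)
    (hρ.integrableOn_Icc.mono_set Ioc_subset_Icc_self)
    ((ae_restrict_mem measurableSet_Ioc).mono fun y hy => hρ0 y (Ioc_subset_Icc_self hy))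
    fun f => ?_
  simpa only [integral_of_le hab] using hpush f f.continuous

theorem slopeLog_self (Φ : ℝ → ℝ) (x : ℝ) : slopeLog Φ x x = -Real.log (deriv Φ x) := by
  rw [slopeLog, if_pos rfl, add_sub_cancel, Real.log_abs]

theorem neg_log_abs_sub_eq_add_slopeLog {Φ : ℝ → ℝ} {x y : ℝ} (hxy : x ≠ y) (hΦ : Φ x ≠ Φ y) :
    -Real.log |Φ x - Φ y| = -Real.log |x - y| + slopeLog Φ x y := by
  have hyx : y - x ≠ 0 := sub_ne_zero.mpr hxy.symm
  have hslope : 1 + ((Φ y - y) - (Φ x - x)) / (y - x) = (Φ y - Φ x) / (y - x) := by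
    field_simp
    ring
  rw [slopeLog, if_neg hxy, hslope, abs_div,
    Real.log_div (abs_ne_zero.mpr (sub_ne_zero.mpr hΦ.symm)) (abs_ne_zero.mpr hyx),
    abs_sub_comm (Φ x), abs_sub_comm x]
  ring

theorem sum_sum_offDiag_neg_log_abs_sub_image {Φ : ℝ → ℝ} {η : Finset ℝ}
    (hinj : InjOn Φ η) :
    (∑ p ∈ η.image Φ, ∑ q ∈ η.image Φ, if p = q then 0 else -Real.log |p - q|) =
      (∑ p ∈ η, ∑ q ∈ η, if p = q then 0 else -Real.log |p - q|) +
        (∑ p ∈ η, ∑ q ∈ η, slopeLog Φ p q) + ∑ p ∈ η, Real.log (deriv Φ p) := by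
  have hterm : ∀ p ∈ η, ∀ q ∈ η, (if Φ p = Φ q then 0 else -Real.log |Φ p - Φ q|) =
      (if p = q then 0 else -Real.log |p - q|) + slopeLog Φ p q +
        if p = q then Real.log (deriv Φ p) else 0 := by
    intro p hp q hq
    by_cases hpq : p = q
    · subst hpq
      simp [slopeLog_self]
    · rw [if_neg (hinj.ne hp hq hpq), if_neg hpq, if_neg hpq, add_zero]
      exact neg_log_abs_sub_eq_add_slopeLog hpq (hinj.ne hp hq hpq)
  simp only [Finset.sum_image hinj]
  rw [Finset.sum_congr rfl fun p hp => Finset.sum_congr rfl (hterm p hp)]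
  simp [Finset.sum_add_distrib]

section LogKernel

variable {ν : Measure ℝ} [NullSingletonClass ν] {s : Set ℝ} {Φ ρ : ℝ → ℝ} {x : ℝ}

theorem ae_neg_log_abs_sub_eq_add_slopeLog (hs : ∀ᵐ y ∂ν, y ∈ s) (hinj : InjOn Φ s)
    (hx : x ∈ s) : ∀ᵐ y ∂ν, -Real.log |Φ x - Φ y| = -Real.log |x - y| + slopeLog Φ x y := by
  filter_upwards [hs, Measure.ae_ne ν x] with y hy hyx
  exact neg_log_abs_sub_eq_add_slopeLog hyx.symm (hinj.ne hx hy hyx.symm)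

theorem integrable_slopeLog (hs : ∀ᵐ y ∂ν, y ∈ s) (hinj : InjOn Φ s) (hx : x ∈ s)
    (hΦx : Integrable (fun y => Real.log |Φ x - Φ y|) ν)
    (hlogx : Integrable (fun y => Real.log |x - y|) ν) : Integrable (slopeLog Φ x) ν :=
  (hlogx.sub hΦx).congr <| by
    filter_upwards [ae_neg_log_abs_sub_eq_add_slopeLog hs hinj hx] with y hy
    simp only [Pi.sub_apply]
    linarith

theorem integral_neg_log_abs_comp_sub (hs : ∀ᵐ y ∂ν, y ∈ s) (hinj : InjOn Φ s) (hx : x ∈ s)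
    (hΦx : Integrable (fun y => Real.log |Φ x - Φ y|) ν)
    (hlogx : Integrable (fun y => Real.log |x - y|) ν) :
    ∫ y, -Real.log |Φ x - Φ y| ∂ν = ∫ y, -Real.log |x - y| ∂ν + ∫ y, slopeLog Φ x y ∂ν := by
  rw [← integral_add hlogx.fun_neg (integrable_slopeLog hs hinj hx hΦx hlogx)]
  exact integral_congr_ae (ae_neg_log_abs_sub_eq_add_slopeLog hs hinj hx)

end LogKernel

namespace PushesToDensity

variable {ν : Measure ℝ} {s : Set ℝ} {Φ ρ : ℝ → ℝ} {M : ℝ}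

theorem integrable_log_abs_sub_comp (h : PushesToDensity ν Φ ρ) (hρM : ∀ᵐ y ∂ν, ‖ρ y‖ ≤ M)
    {p : ℝ} (hlog : Integrable (fun y => Real.log |p - y|) ν) :
    Integrable (fun y => Real.log |p - Φ y|) ν :=
  h.integrable_comp hlog.aestronglyMeasurable
    (hlog.mul_bdd h.aestronglyMeasurable_density hρM)

theorem integral_neg_log_abs_sub_mul [NullSingletonClass ν] (h : PushesToDensity ν Φ ρ)
    (hρM : ∀ᵐ y ∂ν, ‖ρ y‖ ≤ M) (hs : ∀ᵐ y ∂ν, y ∈ s) (hinj : InjOn Φ s)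
    (hlog : ∀ p, Integrable (fun y => Real.log |p - y|) ν) {x : ℝ} (hx : x ∈ s) :
    ∫ y, -Real.log |Φ x - y| * ρ y ∂ν =
      ∫ y, -Real.log |x - y| ∂ν + ∫ y, slopeLog Φ x y ∂ν :=
  (h.integral_comp (g := fun y => -Real.log |Φ x - y|)
      (hlog _).aestronglyMeasurable.neg).symm.trans
    (integral_neg_log_abs_comp_sub hs hinj hx (h.integrable_log_abs_sub_comp hρM (hlog _))
      (hlog x))

theorem sum_integral_neg_log_abs_sub_mul_image [NullSingletonClass ν]
    (h : PushesToDensity ν Φ ρ) (hρM : ∀ᵐ y ∂ν, ‖ρ y‖ ≤ M) (hs : ∀ᵐ y ∂ν, y ∈ s)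
    (hinj : InjOn Φ s) (hlog : ∀ p, Integrable (fun y => Real.log |p - y|) ν) {η : Finset ℝ}
    (hη : ∀ p ∈ η, p ∈ s) :
    ∑ p ∈ η.image Φ, ∫ y, -Real.log |p - y| * ρ y ∂ν =
      ∑ p ∈ η, ∫ y, -Real.log |p - y| ∂ν + ∑ p ∈ η, ∫ y, slopeLog Φ p y ∂ν := by
  rw [Finset.sum_image fun p hp q hq => hinj (hη p hp) (hη q hq), ← Finset.sum_add_distrib]
  exact Finset.sum_congr rfl fun p hp => h.integral_neg_log_abs_sub_mul hρM hs hinj hlog (hη p hp)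

theorem integral_integral_neg_log_abs_sub_mul [IsFiniteMeasure ν] [NullSingletonClass ν]
    (h : PushesToDensity ν Φ ρ) (hρM : ∀ᵐ y ∂ν, ‖ρ y‖ ≤ M) (hs : ∀ᵐ y ∂ν, y ∈ s) (hinj : InjOn Φ s)
    (hlog : ∀ p, Integrable (fun y => Real.log |p - y|) ν)
    (hlog₂ : Integrable (fun z : ℝ × ℝ => Real.log |z.1 - z.2|) (ν.prod ν)) :
    ∫ x, ∫ y, -Real.log |x - y| * (ρ x * ρ y) ∂ν ∂ν =
      ∫ x, ∫ y, -Real.log |x - y| ∂ν ∂ν + ∫ x, ∫ y, slopeLog Φ x y ∂ν ∂ν := by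
  set F : ℝ → ℝ := fun x => ∫ y, -Real.log |x - y| * ρ y ∂ν
  have hρM₂ : ∀ᵐ z ∂ν.prod ν, ‖ρ z.2‖ ≤ M := Measure.quasiMeasurePreserving_snd.ae hρM
  have hF : Integrable F ν :=
    (hlog₂.neg.mul_bdd h.aestronglyMeasurable_density.comp_snd hρM₂).integral_prod_left
  have hFΦ : Integrable (fun x => F (Φ x)) ν :=
    h.integrable_comp hF.aestronglyMeasurable
      (hF.mul_bdd h.aestronglyMeasurable_density hρM)
  have hG : Integrable (fun x => ∫ y, -Real.log |x - y| ∂ν) ν :=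
    hlog₂.neg.integral_prod_left
  have hFΦ_eq : ∀ᵐ x ∂ν, F (Φ x) = ∫ y, -Real.log |x - y| ∂ν + ∫ y, slopeLog Φ x y ∂ν := by
    filter_upwards [hs] with x hx using h.integral_neg_log_abs_sub_mul hρM hs hinj hlog hx
  have hH : Integrable (fun x => ∫ y, slopeLog Φ x y ∂ν) ν :=
    (hFΦ.sub hG).congr <| by
      filter_upwards [hFΦ_eq] with x hx
      simp only [Pi.sub_apply, hx, add_sub_cancel_left]
  calc ∫ x, ∫ y, -Real.log |x - y| * (ρ x * ρ y) ∂ν ∂ν = ∫ x, F x * ρ x ∂ν := by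
        congr 1 with x
        rw [← MeasureTheory.integral_mul_const]
        congr 1 with y
        ring
    _ = ∫ x, F (Φ x) ∂ν := (h.integral_comp hF.aestronglyMeasurable).symm
    _ = _ := by rw [integral_congr_ae hFΦ_eq, integral_add hG hH]

end PushesToDensity

/-- The background terms of `pairEnergy` and `crossTerm` fall inside the scope of the binders
`∑ p ∈ η, ∫ y, _`, so they enter as `#η • ∫ _ dy` of a constant. -/
theorem sum_integral_add_const {ι α : Type*} [MeasurableSpace α] {ν : Measure α}
    [IsFiniteMeasure ν] (η : Finset ι) {f : ι → α → ℝ} (hf : ∀ p ∈ η, Integrable (f p) ν)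
    (c : ℝ) :
    ∑ p ∈ η, ∫ y, (f p y + c) ∂ν = ∑ p ∈ η, ∫ y, f p y ∂ν + η.card * (ν.real univ * c) := by
  rw [Finset.sum_congr rfl fun p hp => integral_add (hf p hp) (integrable_const c)]
  simp [Finset.sum_add_distrib, MeasureTheory.integral_const]

theorem energy_expansion_along_transport_general (lam : ℝ) (hlam : 0 < lam)
    (μ : ℝ → ℝ) (hμcont : ContinuousOn μ (Set.Icc (-lam) lam))
    (hμpos : ∀ x ∈ Set.Icc (-lam) lam, 0 < μ x)
    (Φ : ℝ → ℝ)
    (hC1 : ContDiffOn ℝ 1 Φ (Set.Icc (-lam) lam))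
    (hmono : StrictMonoOn Φ (Set.Icc (-lam) lam))
    (hpush : ∀ f : ℝ → ℝ, Continuous f →
      (∫ x in (-lam)..lam, f (Φ x)) = ∫ x in (-lam)..lam, f x * μ x)
    (η : Finset ℝ) (hη : (η : Set ℝ) ⊆ Set.Ioo (-lam) lam)
    (hlog : IntegrableOn (fun z : ℝ × ℝ => Real.log |z.1 - z.2|)
      (Set.Icc (-lam) lam ×ˢ Set.Icc (-lam) lam))
    (hlogp : ∀ p : ℝ, IntervalIntegrable (fun y => Real.log |p - y|)
      volume (-lam) lam) :
    pairEnergy lam (η.image Φ) μ =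
      pairEnergy lam η (fun _ => 1) + crossTerm lam Φ η +
        ∑ p ∈ η, Real.log (deriv Φ p) := by
  have hle : -lam ≤ lam := by linarith
  simp only [pairEnergy, crossTerm, integral_of_le hle, mul_one]
  set Λ := Ioc (-lam) lam
  set ν := volume.restrict Λ
  have hΛ : Λ ⊆ Icc (-lam) lam := Ioc_subset_Icc_self
  have hs : ∀ᵐ y ∂ν, y ∈ Λ := ae_restrict_mem measurableSet_Ioc
  have hηΛ : ∀ p ∈ η, p ∈ Λ := fun p hp => Ioo_subset_Ioc_self (hη hp)
  have hinj : InjOn Φ Λ := hmono.injOn.mono hΛ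
  have hinjη : InjOn Φ η := hinj.mono hηΛ
  obtain ⟨M, hM⟩ := isCompact_Icc.exists_bound_of_continuousOn hμcont
  have hμM : ∀ᵐ y ∂ν, ‖μ y‖ ≤ M := by filter_upwards [hs] with y hy using hM y (hΛ hy)
  have hlog₁ : ∀ p, Integrable (fun y => Real.log |p - y|) ν := fun p => (hlogp p).1
  have hlog₂ : Integrable (fun z : ℝ × ℝ => Real.log |z.1 - z.2|) (ν.prod ν) := by
    rw [Measure.prod_restrict, ← Measure.volume_eq_prod]
    exact hlog.mono_set (prod_mono hΛ hΛ)
  have hμΦ : PushesToDensity ν Φ μ := .of_intervalIntegral_comp hle hC1.continuousOn hμcont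
    (fun x hx => (hμpos x hx).le) hpush
  rw [sum_integral_add_const _
      (fun p _ => (hlog₁ p).fun_neg.mul_bdd hμΦ.aestronglyMeasurable_density hμM),
    sum_integral_add_const _ (fun p _ => (hlog₁ p).fun_neg),
    sum_integral_add_const _ (fun p hp => integrable_slopeLog hs hinj (hηΛ p hp)
      (hμΦ.integrable_log_abs_sub_comp hμM (hlog₁ _)) (hlog₁ p)),
    Finset.card_image_of_injOn hinjη, sum_sum_offDiag_neg_log_abs_sub_image hinjη,
    hμΦ.sum_integral_neg_log_abs_sub_mul_image hμM hs hinj hlog₁ hηΛ,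
    hμΦ.integral_integral_neg_log_abs_sub_mul hμM hs hinj hlog₁ hlog₂]
  ring

/-- Energy expansion along the transport `Φ`:
the interaction energy of `η_Φ` against `μ(x)dx` equals that of `η` against
`dx`, plus the `-log|1+Δ|` term, plus the Jacobian term `∫ log Φ' dη`. -/
theorem energy_expansion_along_transport (lam : ℝ) (hlam : 0 < lam)
    (μ : ℝ → ℝ) (hμcont : ContinuousOn μ (Set.Icc (-lam) lam))
    (hμpos : ∀ x ∈ Set.Icc (-lam) lam, 0 < μ x)
    (hmass : (∫ x in (-lam)..lam, μ x) = 2 * lam)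
    (Φ : ℝ → ℝ)
    (hC1 : ContDiffOn ℝ 1 Φ (Set.Icc (-lam) lam))
    (hmono : StrictMonoOn Φ (Set.Icc (-lam) lam))
    (hbij : Set.BijOn Φ (Set.Icc (-lam) lam) (Set.Icc (-lam) lam))
    (hpush : ∀ f : ℝ → ℝ, Continuous f →
      (∫ x in (-lam)..lam, f (Φ x)) = ∫ x in (-lam)..lam, f x * μ x)
    (η : Finset ℝ) (hη : (η : Set ℝ) ⊆ Set.Ioo (-lam) lam)
    (hlog : IntegrableOn (fun z : ℝ × ℝ => Real.log |z.1 - z.2|)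
      (Set.Icc (-lam) lam ×ˢ Set.Icc (-lam) lam))
    (hlogp : ∀ p : ℝ, IntervalIntegrable (fun y => Real.log |p - y|)
      volume (-lam) lam) :
    pairEnergy lam (η.image Φ) μ =
      pairEnergy lam η (fun _ => 1) + crossTerm lam Φ η +
        ∑ p ∈ η, Real.log (deriv Φ p) :=
  energy_expansion_along_transport_general lam hlam μ hμcont hμpos Φ hC1 hmono hpush η hη hlog hlogp
end
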